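/- Let λ : [0,∞) → [0,∞) be non-decreasing and let K : [0,∞) → (0,∞) be non-increasing, with both functions measurable and all integrals finite. For points R and T in the plane at distance d apart, define λ_R(x) = λ(|x - T|) as a density field on ℝ². Then ∫_{ℝ²} λ(|x - T|) K(|x - R|) dx ≥ ∫_{ℝ²} λ(|x - T|) K(|x - T|) dx. -/
import Mathlib


open MeasureTheory Real Set

/-- For a radially non-decreasing density λ around T and a non-increasing positive kernel K,
    the mean aggregate pseudo-interference at R is at least that at T:
    ∫_{ℝ²} λ(|x-T|) K(|x-R|) dx ≥ ∫_{ℝ²} λ(|x-T|) K(|x-T|) dx. -/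
theorem stmt_5 (lam K : ℝ → ℝ) (hlam_meas : Measurable lam) (hK_meas : Measurable K)
    (hlam_mono : MonotoneOn lam (Set.Ici 0)) (hK_anti : AntitoneOn K (Set.Ici 0))
    (hlam_nonneg : ∀ u, 0 ≤ u → 0 ≤ lam u) (hK_pos : ∀ u, 0 ≤ u → 0 < K u)
    (R T : EuclideanSpace ℝ (Fin 2)) (d : ℝ) (hd : dist R T = d)
    (h_int_R : Integrable (fun x : EuclideanSpace ℝ (Fin 2) => lam ‖x - T‖ * K ‖x - R‖))
    (h_int_T : Integrable (fun x : EuclideanSpace ℝ (Fin 2) => lam ‖x - T‖ * K ‖x - T‖)) :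
    (∫ x : EuclideanSpace ℝ (Fin 2), lam ‖x - T‖ * K ‖x - R‖) ≥
      ∫ x : EuclideanSpace ℝ (Fin 2), lam ‖x - T‖ * K ‖x - T‖ := by
  set c : EuclideanSpace ℝ (Fin 2) := R + T with hc
  have hcomp : ∀ x : EuclideanSpace ℝ (Fin 2),
      (‖c - x - T‖ = ‖x - R‖ ∧ ‖c - x - R‖ = ‖x - T‖) := by
    intro x
    constructor
    · rw [show c - x - T = R - x by rw [hc]; abel, norm_sub_rev]
    · rw [show c - x - R = T - x by rw [hc]; abel, norm_sub_rev]
  -- swapped integrands via x ↦ c - x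
  have h_int_R' : Integrable (fun x : EuclideanSpace ℝ (Fin 2) => lam ‖x - R‖ * K ‖x - T‖) := by
    have := (integrable_comp_sub_left
      (fun x : EuclideanSpace ℝ (Fin 2) => lam ‖x - T‖ * K ‖x - R‖) c).mpr h_int_R
    refine this.congr (Filter.Eventually.of_forall fun x => ?_)
    simp only [(hcomp x).1, (hcomp x).2]
  have h_int_T' : Integrable (fun x : EuclideanSpace ℝ (Fin 2) => lam ‖x - R‖ * K ‖x - R‖) := by
    have := (integrable_comp_sub_left
      (fun x : EuclideanSpace ℝ (Fin 2) => lam ‖x - T‖ * K ‖x - T‖) c).mpr h_int_T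
    refine this.congr (Filter.Eventually.of_forall fun x => ?_)
    simp only [(hcomp x).1]
  have key1 : (∫ x : EuclideanSpace ℝ (Fin 2), lam ‖x - T‖ * K ‖x - R‖)
      = ∫ x : EuclideanSpace ℝ (Fin 2), lam ‖x - R‖ * K ‖x - T‖ := by
    rw [← integral_sub_left_eq_self
      (fun x : EuclideanSpace ℝ (Fin 2) => lam ‖x - T‖ * K ‖x - R‖) volume c]
    refine integral_congr_ae (Filter.Eventually.of_forall fun x => ?_)
    simp only [(hcomp x).1, (hcomp x).2]
  have key2 : (∫ x : EuclideanSpace ℝ (Fin 2), lam ‖x - T‖ * K ‖x - T‖)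
      = ∫ x : EuclideanSpace ℝ (Fin 2), lam ‖x - R‖ * K ‖x - R‖ := by
    rw [← integral_sub_left_eq_self
      (fun x : EuclideanSpace ℝ (Fin 2) => lam ‖x - T‖ * K ‖x - T‖) volume c]
    refine integral_congr_ae (Filter.Eventually.of_forall fun x => ?_)
    simp only [(hcomp x).1]
  -- pointwise rearrangement inequality
  have hpt : ∀ x : EuclideanSpace ℝ (Fin 2),
      lam ‖x - T‖ * K ‖x - T‖ + lam ‖x - R‖ * K ‖x - R‖
        ≤ lam ‖x - T‖ * K ‖x - R‖ + lam ‖x - R‖ * K ‖x - T‖ := by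
    intro x
    set a := ‖x - T‖
    set b := ‖x - R‖
    have ha : (0:ℝ) ≤ a := norm_nonneg _
    have hb : (0:ℝ) ≤ b := norm_nonneg _
    rcases le_total a b with h | h
    · have h1 := hlam_mono ha hb h
      have h2 := hK_anti ha hb h
      nlinarith [mul_nonneg (sub_nonneg.mpr h1) (sub_nonneg.mpr h2)]
    · have h1 := hlam_mono hb ha h
      have h2 := hK_anti hb ha h
      nlinarith [mul_nonneg (sub_nonneg.mpr h1) (sub_nonneg.mpr h2)]
  have hsum : (∫ x : EuclideanSpace ℝ (Fin 2),
        (lam ‖x - T‖ * K ‖x - T‖ + lam ‖x - R‖ * K ‖x - R‖))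
      ≤ ∫ x : EuclideanSpace ℝ (Fin 2),
        (lam ‖x - T‖ * K ‖x - R‖ + lam ‖x - R‖ * K ‖x - T‖) :=
    integral_mono (h_int_T.add h_int_T') (h_int_R.add h_int_R') hpt
  rw [integral_add h_int_T h_int_T', integral_add h_int_R h_int_R'] at hsum
  rw [ge_iff_le]
  linarith [hsum, key1, key2]
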